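/- Let q be an element of a commutative domain R that is not a root of unity, let U be an antisymmetric p×p integer matrix, and T(U) the quantum torus over R. Then the center of T(U) is the R-span of the normalized monomials X^k with k ∈ ker U, i.e., with ⟨k, l⟩_U = 0 for all l ∈ ℤ^p. -/

import Mathlib

/-! Raising `x_i x_j = q^{U_ij} x_j x_i` to powers and multiplying out gives
`X^k X^l = q^{⟨k,l⟩_U} X^l X^k`, because the exponent of the commutation factor is additive
in each argument; the Weyl normalization scalars play no role. Each `X^l` is a unit, and
conjugation by it scales `X^k` by `q^{⟨k,l⟩_U}`, so `a` commutes with `X^l` iff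
`q^{⟨k,l⟩_U} a_k = a_k` for all coefficients `a_k` of `a`. Over a domain, with `q` not a root
of unity, this says `⟨k,l⟩_U = 0` whenever `a_k ≠ 0`. -/

open scoped BigOperators

/-- Exponent appearing in the Weyl normalization of a monomial:
`∑_{i<j} U_{ij} k_i k_j`. -/
def weylExp {p : ℕ} (U : Matrix (Fin p) (Fin p) ℤ) (k : Fin p → ℤ) : ℤ :=
  ∑ i, ∑ j, if i < j then U i j * k i * k j else 0

/-- The ordered product `x₁^{k₁} ⋯ x_p^{k_p}`. -/
def orderedProd {p : ℕ} {A : Type} [Monoid A] (x : Fin p → Aˣ) (k : Fin p → ℤ) : A :=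
  (((List.finRange p).map fun i => ((x i ^ k i : Aˣ) : A)).prod)

/-- The Weyl-normalized monomial
`X^k = q^{-(1/2)∑_{i<j} U_{ij} k_i k_j} x₁^{k₁} ⋯ x_p^{k_p}`, where `s = q^{1/2}`. -/
def normMono {R : Type} [CommRing R] {p : ℕ} {A : Type} [Ring A] [Algebra R A]
    (s : Rˣ) (U : Matrix (Fin p) (Fin p) ℤ) (x : Fin p → Aˣ) (k : Fin p → ℤ) : A :=
  ((s ^ (-(weylExp U k)) : Rˣ) : R) • orderedProd x k

/-- The antisymmetric bilinear form `⟨k,n⟩_U = ∑_{i,j} U_{ij} k_i n_j`. -/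
def formU {p : ℕ} (U : Matrix (Fin p) (Fin p) ℤ) (k n : Fin p → ℤ) : ℤ :=
  ∑ i, ∑ j, U i j * k i * n j

/-- `A` (with distinguished invertible generators `x i` and basis `b` of normalized
monomials) is the quantum torus over `R` associated to `U` with quantum parameter
`q = s²`: the generators satisfy `x_i x_j = q^{U_{ij}} x_j x_i` and the Weyl-normalized
monomials `X^k`, `k ∈ ℤ^p`, form an `R`-basis of `A`. -/
def IsQuantumTorus {R : Type} [CommRing R] {p : ℕ} {A : Type} [Ring A] [Algebra R A]
    (s : Rˣ) (U : Matrix (Fin p) (Fin p) ℤ) (x : Fin p → Aˣ)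
    (b : Module.Basis (Fin p → ℤ) R A) : Prop :=
  (∀ i j, (x i : A) * (x j : A) = ((s ^ (2 * U i j) : Rˣ) : R) • ((x j : A) * (x i : A)))
  ∧ ∀ k : Fin p → ℤ, b k = normMono s U x k

section

variable {G : Type*} [Group G] {t : G} {m n : ℤ} {a b c : G}

def QCommute (t : G) (n : ℤ) (a c : G) : Prop := a * c = t ^ n * (c * a)

namespace QCommute

theorem symm (h : QCommute t n a c) : QCommute t (-n) c a := by
  unfold QCommute at *
  rw [h]
  group

theorem zpow_right (ht : ∀ g, Commute t g) (h : QCommute t n a c) (j : ℤ) :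
    QCommute t (n * j) a (c ^ j) := by
  have hconj : a * c * a⁻¹ = t ^ n * c := by
    rw [h]
    group
  calc a * c ^ j = (a * c * a⁻¹) ^ j * a := by rw [conj_zpow]; group
    _ = t ^ (n * j) * (c ^ j * a) := by
      rw [hconj, ((ht c).zpow_left n).mul_zpow, ← zpow_mul, mul_assoc]

theorem zpow_left (ht : ∀ g, Commute t g) (h : QCommute t n a c) (i : ℤ) :
    QCommute t (n * i) (a ^ i) c := by
  simpa using (h.symm.zpow_right ht i).symm

theorem mul_left (ht : ∀ g, Commute t g) (h₁ : QCommute t m a c) (h₂ : QCommute t n b c) :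
    QCommute t (m + n) (a * b) c := by
  unfold QCommute at *
  rw [mul_assoc, h₂, ((ht a).zpow_left n).symm.left_comm, ← mul_assoc a, h₁, zpow_add]
  group

theorem mul_right (ht : ∀ g, Commute t g) (h₁ : QCommute t m a b) (h₂ : QCommute t n a c) :
    QCommute t (m + n) a (b * c) := by
  simpa [add_comm] using (h₁.symm.mul_left ht h₂.symm).symm

theorem list_prod_left (ht : ∀ g, Commute t g) {ι : Type*} (L : List ι) (a : ι → G)
    (f : ι → ℤ) (h : ∀ i ∈ L, QCommute t (f i) (a i) c) :
    QCommute t (L.map f).sum (L.map a).prod c := by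
  induction L with
  | nil => simp [QCommute]
  | cons i L ih =>
    simpa using
      (h i List.mem_cons_self).mul_left ht (ih fun j hj => h j (List.mem_cons_of_mem i hj))

theorem list_prod_right (ht : ∀ g, Commute t g) {ι : Type*} (L : List ι) (b : ι → G)
    (f : ι → ℤ) (h : ∀ j ∈ L, QCommute t (f j) a (b j)) :
    QCommute t (L.map f).sum a (L.map b).prod := by
  induction L with
  | nil => simp [QCommute]
  | cons j L ih =>
    simpa using
      (h j List.mem_cons_self).mul_right ht (ih fun i hi => h i (List.mem_cons_of_mem j hi))

end QCommute

end

section OrderedProd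

variable {R A : Type} [CommSemiring R] [Semiring A] [Algebra R A] {p : ℕ}

theorem orderedProd_eq_coe_list_prod (x : Fin p → Aˣ) (k : Fin p → ℤ) :
    orderedProd x k = (((List.finRange p).map fun i => x i ^ k i).prod : Aˣ) := by
  rw [orderedProd, ← Units.coeHom_apply, map_list_prod, List.map_map]
  rfl

theorem qCommute_unitsMap_algebraMap_iff (q : Rˣ) (n : ℤ) (a c : Aˣ) :
    QCommute (Units.map (algebraMap R A).toMonoidHom q) n a c
      ↔ (a : A) * c = ((q ^ n : Rˣ) : R) • ((c : A) * a) := by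
  have hpow : ((Units.map (algebraMap R A).toMonoidHom q ^ n : Aˣ) : A)
      = algebraMap R A ((q ^ n : Rˣ) : R) := by
    rw [← map_zpow]
    rfl
  rw [QCommute, ← Units.val_inj, Units.val_mul, Units.val_mul, Units.val_mul, hpow,
    Algebra.smul_def]

theorem orderedProd_mul_orderedProd (q : Rˣ) (U : Matrix (Fin p) (Fin p) ℤ) (x : Fin p → Aˣ)
    (hx : ∀ i j, (x i : A) * x j = ((q ^ U i j : Rˣ) : R) • ((x j : A) * x i))
    (k l : Fin p → ℤ) :
    orderedProd x k * orderedProd x l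
      = ((q ^ formU U k l : Rˣ) : R) • (orderedProd x l * orderedProd x k) := by
  set t := Units.map (algebraMap R A).toMonoidHom q
  have ht : ∀ g, Commute t g := fun g => Units.ext (Algebra.commutes _ _)
  have hxt : ∀ i j, QCommute t (U i j * k i * l j) (x i ^ k i) (x j ^ l j) := fun i j =>
    (((qCommute_unitsMap_algebraMap_iff q _ _ _).2 (hx i j)).zpow_left ht _).zpow_right ht _
  have hprod := QCommute.list_prod_right ht (List.finRange p) (fun j => x j ^ l j) _ fun j _ =>
    QCommute.list_prod_left ht (List.finRange p) (fun i => x i ^ k i) _ fun i _ => hxt i j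
  rw [qCommute_unitsMap_algebraMap_iff] at hprod
  rw [orderedProd_eq_coe_list_prod, orderedProd_eq_coe_list_prod, hprod, formU, Finset.sum_comm]
  simp only [Fin.sum_univ_def]

end OrderedProd

namespace IsQuantumTorus

variable {R A : Type} [CommRing R] [Ring A] [Algebra R A] {p : ℕ} {s : Rˣ}
  {U : Matrix (Fin p) (Fin p) ℤ} {x : Fin p → Aˣ} {b : Module.Basis (Fin p → ℤ) R A}

theorem basis_mul_basis (h : IsQuantumTorus s U x b) (k l : Fin p → ℤ) :
    b k * b l = (((s ^ 2) ^ formU U k l : Rˣ) : R) • (b l * b k) := by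
  have hx : ∀ i j, (x i : A) * x j = (((s ^ 2) ^ U i j : Rˣ) : R) • ((x j : A) * x i) := by
    intro i j
    rw [h.1, ← zpow_natCast, ← zpow_mul]
    rfl
  rw [h.2, h.2, normMono, normMono, smul_mul_smul_comm, smul_mul_smul_comm,
    orderedProd_mul_orderedProd _ U x hx, smul_smul, smul_smul]
  congr 1
  ring

theorem isUnit_basis (h : IsQuantumTorus s U x b) (k : Fin p → ℤ) : IsUnit (b k) := by
  rw [h.2, normMono, Algebra.smul_def, orderedProd_eq_coe_list_prod]
  exact ((Units.isUnit _).map _).mul (Units.isUnit _)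

end IsQuantumTorus

section CenterOfBasis

variable {R A ι : Type*} [CommSemiring R] [Semiring A] [Algebra R A] (b : Module.Basis ι R A)

theorem mem_center_iff_forall_basis_mul {a : A} :
    a ∈ Subalgebra.center R A ↔ ∀ l, b l * a = a * b l := by
  rw [Subalgebra.mem_center_iff]
  refine ⟨fun h l => h (b l), fun h y => ?_⟩
  exact LinearMap.congr_fun
    (b.ext (f₁ := LinearMap.mulRight R a) (f₂ := LinearMap.mulLeft R a) h) y

theorem repr_inv_mul_mul_of_basis_mul (u : Aˣ) (χ : ι → R)
    (hχ : ∀ k, b k * u = χ k • ((u : A) * b k)) (a : A) (k : ι) :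
    b.repr (↑u⁻¹ * a * u) k = χ k * b.repr a k := by
  have hdiag : ∀ m, ↑u⁻¹ * (b m * u) = χ m • b m := fun m => by
    rw [hχ, mul_smul_comm, Units.inv_mul_cancel_left]
  have hcoord :
      b.coord k ∘ₗ LinearMap.mulLeft R (↑u⁻¹ : A) ∘ₗ LinearMap.mulRight R (u : A)
        = χ k • b.coord k := b.ext fun m => by
    by_cases hmk : m = k
    · subst hmk
      simp [hdiag]
    · simp [hdiag, hmk]
  simpa [mul_assoc] using LinearMap.congr_fun hcoord a

theorem basis_mul_comm_iff_of_basis_mul {χ : ι → ι → R}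
    (hχ : ∀ k l, b k * b l = χ k l • (b l * b k)) {l : ι} (hl : IsUnit (b l)) (a : A) :
    b l * a = a * b l ↔ ∀ k, χ k l * b.repr a k = b.repr a k := by
  have hχl : ∀ k, b k * hl.unit = χ k l • (hl.unit * b k) := by
    simpa only [hl.unit_spec] using (hχ · l)
  rw [← hl.unit_spec, eq_comm, ← Units.inv_mul_eq_iff_eq_mul, ← mul_assoc, b.ext_elem_iff]
  simp only [repr_inv_mul_mul_of_basis_mul b hl.unit (χ · l) hχl]

theorem coe_center_eq_span_image_of_basis_mul [IsDomain R] {χ : ι → ι → R}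
    (hχ : ∀ k l, b k * b l = χ k l • (b l * b k)) (hb : ∀ l, IsUnit (b l)) :
    (Subalgebra.center R A : Set A) = Submodule.span R (b '' {k | ∀ l, χ k l = 1}) := by
  ext a
  rw [SetLike.mem_coe, SetLike.mem_coe, b.mem_span_image, mem_center_iff_forall_basis_mul b]
  simp only [basis_mul_comm_iff_of_basis_mul b hχ (hb _), Set.subset_def, Finset.mem_coe,
    Finsupp.mem_support_iff, Set.mem_ofPred_eq]
  constructor
  · exact fun h k hk l => (mul_eq_right₀ hk).1 (h l k)
  · intro h l k
    by_cases hk : b.repr a k = 0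
    · rw [hk, mul_zero]
    · rw [h k hk l, one_mul]

end CenterOfBasis

theorem center_quantumTorus_generic_general {R : Type} [CommRing R] [IsDomain R] {p : ℕ}
    (s : Rˣ) (U : Matrix (Fin p) (Fin p) ℤ)
    (hq : ∀ n : ℕ, 0 < n → (s ^ 2) ^ n ≠ 1)
    {A : Type} [Ring A] [Algebra R A]
    (x : Fin p → Aˣ) (b : Module.Basis (Fin p → ℤ) R A) (h : IsQuantumTorus s U x b) :
    (Subalgebra.center R A : Set A)
      = (Submodule.span R
          {a : A | ∃ k : Fin p → ℤ, (∀ l : Fin p → ℤ, formU U k l = 0) ∧ a = b k}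
          : Set A) := by
  have hzpow_eq_one : ∀ m : ℤ, (s ^ 2) ^ m = 1 ↔ m = 0 := fun m => by
    rw [← orderOf_dvd_iff_zpow_eq_one, orderOf_eq_zero_iff'.2 hq, Nat.cast_zero, zero_dvd_iff]
  rw [coe_center_eq_span_image_of_basis_mul b h.basis_mul_basis h.isUnit_basis]
  congr
  ext a
  simp only [Set.mem_image, Set.mem_ofPred_eq, Units.val_eq_one, hzpow_eq_one]
  simp only [eq_comm (a := a)]

/-- If `q = s²` is not a root of unity (in a commutative domain `R`), the center of the
quantum torus `T(U)` is the `R`-span of the normalized monomials `X^k` with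
`⟨k, l⟩_U = 0` for all `l ∈ ℤ^p`. -/
theorem center_quantumTorus_generic {R : Type} [CommRing R] [IsDomain R] {p : ℕ}
    (s : Rˣ) (U : Matrix (Fin p) (Fin p) ℤ) (hU : ∀ i j, U j i = -U i j)
    (hq : ∀ n : ℕ, 0 < n → (s ^ 2) ^ n ≠ 1)
    {A : Type} [Ring A] [Algebra R A]
    (x : Fin p → Aˣ) (b : Module.Basis (Fin p → ℤ) R A) (h : IsQuantumTorus s U x b) :
    (Subalgebra.center R A : Set A)
      = (Submodule.span R
          {a : A | ∃ k : Fin p → ℤ, (∀ l : Fin p → ℤ, formU U k l = 0) ∧ a = b k}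
          : Set A) :=
  center_quantumTorus_generic_general s U hq x b h
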